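/- Let I₁ = Y·L^{-b₃/b₁} and I₂ = Y·K^{-b₃/b₂} (with b₁, b₂, b₃ ≠ 0, and L, K, Y > 0). Then for any α, the Cobb-Douglas invariant J = Y·L^{-α}·K^{-(b₃/b₂ - αb₁/b₂)} satisfies J = I₂ · (I₁/I₂)^{αb₁/b₃}; in particular J is a function of the fundamental invariants I₁ and I₂. -/
import Mathlib


theorem stmt_11 (b₁ b₂ b₃ L K Y α : ℝ)
    (hb₁ : b₁ ≠ 0) (hb₂ : b₂ ≠ 0) (hb₃ : b₃ ≠ 0)
    (hL : 0 < L) (hK : 0 < K) (hY : 0 < Y) :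
    Y * L ^ (-α) * K ^ (-(b₃ / b₂ - α * b₁ / b₂))
      = (Y * K ^ (-(b₃ / b₂))) *
        ((Y * L ^ (-(b₃ / b₁))) / (Y * K ^ (-(b₃ / b₂)))) ^ (α * b₁ / b₃) := by
  rw [mul_div_mul_left _ _ hY.ne',
    Real.div_rpow (Real.rpow_pos_of_pos hL _).le (Real.rpow_pos_of_pos hK _).le,
    ← Real.rpow_mul hL.le, ← Real.rpow_mul hK.le]
  have h1 : -(b₃ / b₁) * (α * b₁ / b₃) = -α := by field_simp
  have h2 : -(b₃ / b₂) * (α * b₁ / b₃) = -(α * b₁ / b₂) := by field_simp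
  rw [h1, h2, show -(b₃ / b₂ - α * b₁ / b₂) = -(b₃ / b₂) + α * b₁ / b₂ by ring,
    Real.rpow_add hK, Real.rpow_neg hK.le (α * b₁ / b₂)]
  field_simp
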